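/- arXiv:2510.20533 — 2 statements merged into one kernel-verified Lean document; each statement's English description precedes it below -/
import Mathlib

section
/- Let χ be a regular smooth closed curve of length L and let Ω be the tubular neighbourhood of radius R around χ. Then there exists a smooth vector field X on Ω with curl X = 0 on Ω, ∫₀^L X(χ(s))·χ'(s) ds = 1, and ‖X‖_{L²(Ω)} ≤ R·√(2π/L). -/
open MeasureTheory Set Real

noncomputable section

/-- Points/vectors of `ℝ³`. -/
abbrev V3 := Fin 3 → ℝ
/-- Points/vectors of `ℝ²`. -/
abbrev V2 := Fin 2 → ℝ

/-- Euclidean dot product on `ℝ³`. -/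
def dot3 (a b : V3) : ℝ := a 0 * b 0 + a 1 * b 1 + a 2 * b 2

/-- Cross product on `ℝ³`. -/
def cross3 (a b : V3) : V3 :=
  ![a 1 * b 2 - a 2 * b 1, a 2 * b 0 - a 0 * b 2, a 0 * b 1 - a 1 * b 0]

/-- Euclidean norm on `ℝ³`. -/
def norm3 (a : V3) : ℝ := Real.sqrt (dot3 a a)

/-- Standard basis of `ℝ³`. -/
def basis3 (i : Fin 3) : V3 := fun j => if j = i then 1 else 0

/-- `i`-th partial derivative. -/
def pderiv3 (i : Fin 3) (f : V3 → ℝ) (x : V3) : ℝ := fderiv ℝ f x (basis3 i)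

/-- Gradient of a scalar function on `ℝ³`. -/
def grad3 (f : V3 → ℝ) (x : V3) : V3 := fun i => pderiv3 i f x

/-- Curl of a vector field on `ℝ³`. -/
def curl3 (B : V3 → V3) (x : V3) : V3 :=
  ![pderiv3 1 (fun y => B y 2) x - pderiv3 2 (fun y => B y 1) x,
    pderiv3 2 (fun y => B y 0) x - pderiv3 0 (fun y => B y 2) x,
    pderiv3 0 (fun y => B y 1) x - pderiv3 1 (fun y => B y 0) x]

/-- Divergence of a vector field on `ℝ³`. -/
def div3 (B : V3 → V3) (x : V3) : ℝ :=
  pderiv3 0 (fun y => B y 0) x + pderiv3 1 (fun y => B y 1) x + pderiv3 2 (fun y => B y 2) x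

/-- The Biot–Savart field of `B` on `Ω`:
`BS(B)(x) = (1/4π) ∫_Ω B(y) × (x−y)/|x−y|³ dy`. -/
def biotSavart (Ω : Set V3) (B : V3 → V3) (x : V3) : V3 :=
  (4 * π)⁻¹ • ∫ y in Ω, ((norm3 (x - y)) ^ 3)⁻¹ • cross3 (B y) (x - y)

/-- Helicity `H(B) = (1/4π) ∫_Ω ∫_Ω B(x) · (B(y) × (x−y)/|x−y|³) dy dx`. -/
def helicity (Ω : Set V3) (B : V3 → V3) : ℝ :=
  (4 * π)⁻¹ * ∫ x in Ω, ∫ y in Ω,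
    dot3 (B x) (cross3 (B y) (((norm3 (x - y)) ^ 3)⁻¹ • (x - y)))

/-- Squared `L²(Ω)` norm of a vector field. -/
def l2normSq (Ω : Set V3) (B : V3 → V3) : ℝ := ∫ x in Ω, dot3 (B x) (B x)

/-- `B ∈ L²V₀(Ω)`: square-integrable, weakly div-free and tangent to `∂Ω`. -/
def MemL2V0 (Ω : Set V3) (B : V3 → V3) : Prop :=
  MemLp B 2 (volume.restrict Ω) ∧
  ∀ f : V3 → ℝ, ContDiff ℝ (⊤ : ℕ∞) f → ∫ x in Ω, dot3 (B x) (grad3 f x) = 0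

/-- The largest (modified) Biot–Savart eigenvalue, as the sup of the helicity Rayleigh
quotient over nonzero fields in `L²V₀(Ω)`. -/
def lambdaPlus (Ω : Set V3) : ℝ :=
  sSup {h : ℝ | ∃ B : V3 → V3, MemL2V0 Ω B ∧ l2normSq Ω B ≠ 0 ∧
    h = helicity Ω B / l2normSq Ω B}

/-- A bounded smooth domain in `ℝ³`. -/
def IsBoundedSmoothDomain (Ω : Set V3) : Prop :=
  Ω.Nonempty ∧ Bornology.IsBounded Ω ∧ IsOpen Ω ∧ IsConnected Ω ∧
  ∀ p ∈ frontier Ω, ∃ U : Set V3, ∃ g : V3 → ℝ,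
    IsOpen U ∧ p ∈ U ∧ ContDiffOn ℝ (⊤ : ℕ∞) g U ∧
    (∀ x ∈ U, grad3 g x ≠ 0) ∧ Ω ∩ U = {x ∈ U | g x < 0}

/-- `Λ(V)`: supremum of `λ₊` over bounded smooth domains of volume `V`. -/
def LambdaSup (Vol : ℝ) : ℝ :=
  sSup {h : ℝ | ∃ Ω : Set V3, IsBoundedSmoothDomain Ω ∧
    volume Ω = ENNReal.ofReal Vol ∧ h = lambdaPlus Ω}

/-- The closed unit disc in `ℝ²`. -/
def disc2 : Set V2 := {x : V2 | x 0 ^ 2 + x 1 ^ 2 ≤ 1}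

/-- The open unit disc in `ℝ²`. -/
def openDisc2 : Set V2 := {x : V2 | x 0 ^ 2 + x 1 ^ 2 < 1}

/-- The point `(cos φ, sin φ)` of the unit circle in `ℝ²`. -/
def circlePt (φ : ℝ) : V2 := ![Real.cos φ, Real.sin φ]

/-- Euclidean norm on `ℝ²`. -/
def norm2 (a : V2) : ℝ := Real.sqrt (a 0 ^ 2 + a 1 ^ 2)

/-- A regular smooth closed curve of length `L`: a smooth arc-length parametrised
embedding `χ : ℝ/(LΖ) → ℝ³` with nowhere vanishing second derivative. -/
structure RegCurve where
  L : ℝ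
  hL : 0 < L
  χ : ℝ → V3
  smooth : ContDiff ℝ (⊤ : ℕ∞) χ
  periodic : ∀ s, χ (s + L) = χ s
  inj : InjOn χ (Ico 0 L)
  unitSpeed : ∀ s, dot3 (deriv χ s) (deriv χ s) = 1
  regular : ∀ s, deriv (deriv χ) s ≠ 0

namespace RegCurve

variable (c : RegCurve)

/-- Frenet tangent `T = χ'`. -/
def Tg (s : ℝ) : V3 := deriv c.χ s

/-- Curvature `κ = |χ''|`. -/
def kappa (s : ℝ) : ℝ := norm3 (deriv (deriv c.χ) s)

/-- Frenet normal `N = χ''/|χ''|`. -/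
def Nor (s : ℝ) : V3 := (c.kappa s)⁻¹ • deriv (deriv c.χ) s

/-- Frenet binormal `Bf = T × N`. -/
def Binor (s : ℝ) : V3 := cross3 (c.Tg s) (c.Nor s)

/-- Torsion `τ`, determined by `Bf' = −τN`. -/
def tau (s : ℝ) : ℝ := - dot3 (deriv c.Binor s) (c.Nor s)

/-- Maximal curvature `κ₊`. -/
def kappaPlus : ℝ := sSup (c.kappa '' Icc 0 c.L)

/-- Maximal absolute torsion `τ₊`. -/
def tauPlus : ℝ := sSup ((fun s => |c.tau s|) '' Icc 0 c.L)

end RegCurve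

/-- The defining map `(s, x) ↦ χ(s) + R x₁ N(s) + R x₂ Bf(s)` of a tubular neighbourhood
of radius `R` around `χ`. -/
def tubeMap (c : RegCurve) (R : ℝ) (q : ℝ × V2) : V3 :=
  c.χ q.1 + (R * q.2 0) • c.Nor q.1 + (R * q.2 1) • c.Binor q.1

/-- `Ω` is the tubular neighbourhood of radius `R` around the regular closed curve `χ`. -/
def IsTube (c : RegCurve) (R : ℝ) (Ω : Set V3) : Prop :=
  0 < R ∧ c.kappaPlus * R < 1 ∧
  InjOn (tubeMap c R) (Ico 0 c.L ×ˢ disc2) ∧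
  Ω = tubeMap c R '' (Ico 0 c.L ×ˢ openDisc2)

/-- The quantity `η = √((1−κ₊R)²/((1−κ₊R)² + R²τ₊²))` of a tubular neighbourhood. -/
def tubeEta (c : RegCurve) (R : ℝ) : ℝ :=
  Real.sqrt ((1 - c.kappaPlus * R) ^ 2 /
    ((1 - c.kappaPlus * R) ^ 2 + R ^ 2 * c.tauPlus ^ 2))

/-- The boundary parametrisation `Φ(s,φ) = χ(s) + R cos(φ) N(s) + R sin(φ) Bf(s)` of a
tubular neighbourhood. -/
def tubeBdry (c : RegCurve) (R : ℝ) (s φ : ℝ) : V3 :=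
  c.χ s + (R * Real.cos φ) • c.Nor s + (R * Real.sin φ) • c.Binor s

namespace S10

/-! ### vector algebra -/

lemma dot3_nonneg (v : V3) : 0 ≤ dot3 v v := by
  have : dot3 v v = v 0 ^ 2 + v 1 ^ 2 + v 2 ^ 2 := by simp [dot3]; ring
  rw [this]; positivity

lemma dot3_pos {v : V3} (hv : v ≠ 0) : 0 < dot3 v v := by
  rcases (dot3_nonneg v).lt_or_eq with h | h
  · exact h
  · exfalso; apply hv; funext i
    have h1 : v 0 = 0 ∧ v 1 = 0 ∧ v 2 = 0 := by
      simp only [dot3] at h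
      refine ⟨?_, ?_, ?_⟩ <;> nlinarith [sq_nonneg (v 0), sq_nonneg (v 1), sq_nonneg (v 2)]
    fin_cases i <;> simp [h1.1, h1.2.1, h1.2.2]

lemma eta3 (y : V3) : y = ![y 0, y 1, y 2] := by
  funext i; fin_cases i <;> rfl

/-! ### curve lemmas -/

variable (c : RegCurve)

lemma smooth_Tg : ContDiff ℝ (⊤ : ℕ∞) c.Tg := by
  have := ContDiff.iterate_deriv 1 c.smooth
  exact this

lemma smooth_dd : ContDiff ℝ (⊤ : ℕ∞) (deriv (deriv c.χ)) := by
  have := ContDiff.iterate_deriv 2 c.smooth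
  simpa [Function.iterate_succ, Function.comp_def] using this

lemma per_deriv {f : ℝ → V3} {L : ℝ} (h : Function.Periodic f L) :
    Function.Periodic (deriv f) L := by
  intro s
  have : (fun x => f (x + L)) = f := funext fun x => h x
  rw [← deriv_comp_add_const f L s, this]

lemma per_χ : Function.Periodic c.χ c.L := c.periodic

lemma per_Tg : Function.Periodic c.Tg c.L := per_deriv (per_χ c)

lemma per_dd : Function.Periodic (deriv (deriv c.χ)) c.L := per_deriv (per_Tg c)

lemma kappa_sq (s : ℝ) : c.kappa s ^ 2 = dot3 (deriv (deriv c.χ) s) (deriv (deriv c.χ) s) := by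
  simp only [RegCurve.kappa, norm3]
  exact Real.sq_sqrt (dot3_nonneg _)

lemma kappa_pos (s : ℝ) : 0 < c.kappa s :=
  Real.sqrt_pos.2 (dot3_pos (c.regular s))

lemma per_kappa : Function.Periodic c.kappa c.L := fun s => by
  simp only [RegCurve.kappa, per_dd c s]

lemma per_Nor : Function.Periodic c.Nor c.L := fun s => by
  simp only [RegCurve.Nor, per_dd c s, per_kappa c s]

lemma per_Binor : Function.Periodic c.Binor c.L := fun s => by
  simp only [RegCurve.Binor, per_Nor c s, per_Tg c s]

lemma smooth_comp_proj {f : ℝ → V3} (hf : ContDiff ℝ (⊤ : ℕ∞) f) (i : Fin 3) :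
    ContDiff ℝ (⊤ : ℕ∞) (fun s => f s i) :=
  (ContinuousLinearMap.proj (R := ℝ) (φ := fun _ : Fin 3 => ℝ) i).contDiff.comp hf

lemma smooth_dot3 {u v : ℝ → V3} (hu : ContDiff ℝ (⊤ : ℕ∞) u) (hv : ContDiff ℝ (⊤ : ℕ∞) v) :
    ContDiff ℝ (⊤ : ℕ∞) (fun s => dot3 (u s) (v s)) := by
  simp only [dot3]
  exact (((smooth_comp_proj hu 0).mul (smooth_comp_proj hv 0)).add
    ((smooth_comp_proj hu 1).mul (smooth_comp_proj hv 1))).add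
    ((smooth_comp_proj hu 2).mul (smooth_comp_proj hv 2))

lemma smooth_kappa : ContDiff ℝ (⊤ : ℕ∞) c.kappa := by
  rw [contDiff_iff_contDiffAt]
  intro s
  exact ContDiffAt.sqrt ((smooth_dot3 (smooth_dd c) (smooth_dd c)).contDiffAt)
    (ne_of_gt (dot3_pos (c.regular s)))

lemma smooth_Nor : ContDiff ℝ (⊤ : ℕ∞) c.Nor := by
  exact ContDiff.smul ((smooth_kappa c).inv (fun s => (kappa_pos c s).ne')) (smooth_dd c)

lemma smooth_Binor : ContDiff ℝ (⊤ : ℕ∞) c.Binor := by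
  rw [contDiff_pi]  -- goal : ∀ i, ContDiff (fun s => Binor c s i)
  intro i
  fin_cases i <;>
  · simp only [RegCurve.Binor, cross3, Matrix.cons_val_zero, Matrix.cons_val_one, Matrix.head_cons,
      Matrix.cons_val_two, Matrix.tail_cons, Fin.isValue]
    exact ((smooth_comp_proj (smooth_Tg c) _).mul (smooth_comp_proj (smooth_Nor c) _)).sub
      ((smooth_comp_proj (smooth_Tg c) _).mul (smooth_comp_proj (smooth_Nor c) _))

end S10
namespace S10
variable (c : RegCurve)

lemma one_le_inf : (1 : WithTop ℕ∞) ≤ ((⊤ : ℕ∞) : WithTop ℕ∞) := by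
  exact_mod_cast le_top

lemma two_le_inf : (2 : WithTop ℕ∞) ≤ ((⊤ : ℕ∞) : WithTop ℕ∞) := by
  rw [show ((2:WithTop ℕ∞)) = ((2:ℕ∞) : WithTop ℕ∞) from rfl]
  exact WithTop.coe_le_coe.2 le_top

lemma dot3_comm (a b : V3) : dot3 a b = dot3 b a := by simp [dot3]; ring

lemma dot3_smul_right (r : ℝ) (a b : V3) : dot3 a (r • b) = r * dot3 a b := by
  simp [dot3]; ring

lemma dot3_smul_left (r : ℝ) (a b : V3) : dot3 (r • a) b = r * dot3 a b := by
  simp [dot3]; ring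

lemma dot3_cross_left (a b : V3) : dot3 a (cross3 a b) = 0 := by
  simp [dot3, cross3]; ring

lemma dot3_cross_right (a b : V3) : dot3 b (cross3 a b) = 0 := by
  simp [dot3, cross3]; ring

lemma cross3_cross (a b : V3) : cross3 a (cross3 b a) = dot3 a a • b - dot3 a b • a := by
  funext i; fin_cases i <;> · simp [dot3, cross3]; ring

lemma hasDerivAt_comp_proj {f : ℝ → V3} (hf : Differentiable ℝ f) (s : ℝ) (i : Fin 3) :
    HasDerivAt (fun t => f t i) (deriv f s i) s :=
  hasDerivAt_pi.1 (hf s).hasDerivAt i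

lemma hasDerivAt_dot3 {u v : ℝ → V3} (hu : Differentiable ℝ u) (hv : Differentiable ℝ v) (s : ℝ) :
    HasDerivAt (fun t => dot3 (u t) (v t))
      (dot3 (deriv u s) (v s) + dot3 (u s) (deriv v s)) s := by
  have h := fun i => (hasDerivAt_comp_proj hu s i).mul (hasDerivAt_comp_proj hv s i)
  have := ((h 0).add (h 1)).add (h 2)
  simp only [dot3]
  exact this.congr_deriv (by ring)

lemma diff_Tg : Differentiable ℝ c.Tg := (smooth_Tg c).differentiable (by simp)
lemma diff_dd : Differentiable ℝ (deriv (deriv c.χ)) := (smooth_dd c).differentiable (by simp)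
lemma diff_Nor : Differentiable ℝ c.Nor := (smooth_Nor c).differentiable (by simp)
lemma diff_Binor : Differentiable ℝ c.Binor := (smooth_Binor c).differentiable (by simp)

lemma deriv_Tg (s : ℝ) : deriv c.Tg s = deriv (deriv c.χ) s := rfl

lemma const_dot_deriv {u v : ℝ → V3} (hu : Differentiable ℝ u) (hv : Differentiable ℝ v)
    (k : ℝ) (h : ∀ t, dot3 (u t) (v t) = k) (s : ℝ) :
    dot3 (deriv u s) (v s) + dot3 (u s) (deriv v s) = 0 := by
  have h1 : (fun t => dot3 (u t) (v t)) = fun _ => k := funext h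
  have h2 : HasDerivAt (fun t => dot3 (u t) (v t)) 0 s := by
    rw [h1]; exact hasDerivAt_const s k
  exact ((hasDerivAt_dot3 hu hv s).unique h2)

lemma ddT (s : ℝ) : dot3 (deriv (deriv c.χ) s) (c.Tg s) = 0 := by
  have := const_dot_deriv (diff_Tg c) (diff_Tg c) 1 c.unitSpeed s
  rw [deriv_Tg] at this
  have hc := dot3_comm (c.Tg s) (deriv (deriv c.χ) s)
  simp only [RegCurve.Tg] at this hc ⊢
  linarith [this, hc]

lemma TN (s : ℝ) : dot3 (c.Tg s) (c.Nor s) = 0 := by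
  simp only [RegCurve.Nor, dot3_smul_right]
  rw [dot3_comm, ddT]
  ring

lemma NN (s : ℝ) : dot3 (c.Nor s) (c.Nor s) = 1 := by
  simp only [RegCurve.Nor, dot3_smul_right, dot3_smul_left, ← kappa_sq]
  have h := (kappa_pos c s).ne'
  field_simp

lemma dd_eq (s : ℝ) : deriv (deriv c.χ) s = c.kappa s • c.Nor s := by
  simp only [RegCurve.Nor, smul_smul]
  rw [mul_inv_cancel₀ (kappa_pos c s).ne', one_smul]

lemma TNd (s : ℝ) : dot3 (c.Tg s) (deriv c.Nor s) = - c.kappa s := by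
  have h := const_dot_deriv (diff_Tg c) (diff_Nor c) 0 (TN c) s
  rw [deriv_Tg, dd_eq, dot3_smul_left, NN] at h
  linarith

lemma TB (s : ℝ) : dot3 (c.Tg s) (c.Binor s) = 0 := dot3_cross_left _ _

lemma NB (s : ℝ) : dot3 (c.Nor s) (c.Binor s) = 0 := dot3_cross_right _ _

lemma TBd (s : ℝ) : dot3 (c.Tg s) (deriv c.Binor s) = 0 := by
  have h := const_dot_deriv (diff_Tg c) (diff_Binor c) 0 (TB c) s
  rw [deriv_Tg, dd_eq, dot3_smul_left, NB] at h
  linarith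

lemma NcB (s : ℝ) : cross3 (c.Nor s) (c.Binor s) = c.Tg s := by
  simp only [RegCurve.Binor, cross3_cross, NN]
  rw [dot3_comm, TN]
  simp

lemma kappa_eq_mod (s : ℝ) : c.kappa (toIcoMod c.hL 0 s) = c.kappa s := by
  rw [← self_sub_toIcoDiv_zsmul c.hL 0 s]
  exact (per_kappa c).sub_zsmul_eq _

lemma kappa_le (s : ℝ) : c.kappa s ≤ c.kappaPlus := by
  rw [← kappa_eq_mod c s]
  apply le_csSup (((isCompact_Icc).image (smooth_kappa c).continuous).bddAbove)
  apply mem_image_of_mem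
  have := toIcoMod_mem_Ico c.hL 0 s
  simp only [zero_add] at this
  exact ⟨this.1, this.2.le⟩

lemma kappaPlus_nonneg : 0 ≤ c.kappaPlus := le_trans (kappa_pos c 0).le (kappa_le c 0)

lemma denom_pos {R : ℝ} (hR : 0 < R) (hκR : c.kappaPlus * R < 1) {s x1 : ℝ} (hx : |x1| ≤ 1) :
    0 < 1 - R * c.kappa s * x1 := by
  have h1 := kappa_le c s
  have h2 := kappa_pos c s
  have h3 := le_abs_self x1
  have h4 := neg_abs_le x1
  have h5 := abs_nonneg x1
  nlinarith [mul_pos hR h2]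

end S10
namespace S10
variable (c : RegCurve) (R : ℝ)

def Phi (s a b : ℝ) : V3 := c.χ s + (R * a) • c.Nor s + (R * b) • c.Binor s

def Fm (y : V3) : V3 := Phi c R (y 0) (y 1) (y 2)

def Sdom : Set V3 := {y | y 0 ∈ Ico 0 c.L ∧ (y 1) ^ 2 + (y 2) ^ 2 < 1}

def Scdom : Set V3 := {y | y 0 ∈ Ico 0 c.L ∧ (y 1) ^ 2 + (y 2) ^ 2 ≤ 1}

def col0 (y : V3) : V3 :=
  deriv c.χ (y 0) + (R * y 1) • deriv c.Nor (y 0) + (R * y 2) • deriv c.Binor (y 0)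

def DFmat (y : V3) : Matrix (Fin 3) (Fin 3) ℝ :=
  Matrix.of fun i j => ![col0 c R y, R • c.Nor (y 0), R • c.Binor (y 0)] j i

def DFL (y : V3) : V3 →L[ℝ] V3 :=
  LinearMap.toContinuousLinearMap (Matrix.toLin' (DFmat c R y))

def Wf (y : V3) : V3 := (c.L * (1 - R * c.kappa (y 0) * y 1))⁻¹ • c.Tg (y 0)

open Classical in
def Xf (x : V3) : V3 :=
  if h : ∃ y, y ∈ Sdom c ∧ Fm c R y = x then Wf c R h.choose else 0

lemma Phi_per (a b : ℝ) : Function.Periodic (fun s => Phi c R s a b) c.L := by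
  intro s
  simp only [Phi, per_χ c s, per_Nor c s, per_Binor c s]

lemma Phi_mod (s a b : ℝ) : Phi c R (toIcoMod c.hL 0 s) a b = Phi c R s a b := by
  rw [← self_sub_toIcoDiv_zsmul c.hL 0 s]
  exact (Phi_per c R a b).sub_zsmul_eq _

lemma Tg_eq_mod (s : ℝ) : c.Tg (toIcoMod c.hL 0 s) = c.Tg s := by
  rw [← self_sub_toIcoDiv_zsmul c.hL 0 s]
  exact (per_Tg c).sub_zsmul_eq _

lemma Wf_mod (s a b : ℝ) : Wf c R ![toIcoMod c.hL 0 s, a, b] = Wf c R ![s, a, b] := by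
  simp only [Wf, Matrix.cons_val_zero, Matrix.cons_val_one, Matrix.head_cons,
    kappa_eq_mod, Tg_eq_mod]

lemma toIcoMod_mem' (s : ℝ) : toIcoMod c.hL 0 s ∈ Ico 0 c.L := by
  have := toIcoMod_mem_Ico c.hL 0 s
  simpa using this

lemma Fm_cons (s a b : ℝ) : Fm c R ![s, a, b] = Phi c R s a b := by
  simp [Fm]

lemma Ω_eq {Ω : Set V3} (hT : IsTube c R Ω) : Ω = Fm c R '' Sdom c := by
  rw [hT.2.2.2]
  ext x
  constructor
  · rintro ⟨⟨s, x2⟩, ⟨hs, hx2⟩, rfl⟩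
    refine ⟨![s, x2 0, x2 1], ⟨by simpa using hs, by simpa [openDisc2] using hx2⟩, ?_⟩
    rw [Fm_cons]; rfl
  · rintro ⟨y, ⟨hy0, hy12⟩, rfl⟩
    exact ⟨(y 0, ![y 1, y 2]), ⟨hy0, by simpa [openDisc2] using hy12⟩, rfl⟩

lemma inj_Fm {Ω : Set V3} (hT : IsTube c R Ω) : InjOn (Fm c R) (Scdom c) := by
  intro y hy y' hy' h
  have h2 : tubeMap c R (y 0, ![y 1, y 2]) = tubeMap c R (y' 0, ![y' 1, y' 2]) := h
  have h3 := hT.2.2.1 (Set.mk_mem_prod hy.1 (by simpa [disc2] using hy.2))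
    (Set.mk_mem_prod hy'.1 (by simpa [disc2] using hy'.2)) h2
  have h0 : y 0 = y' 0 := congrArg Prod.fst h3
  have h12 : (![y 1, y 2] : V2) = ![y' 1, y' 2] := congrArg Prod.snd h3
  have h1 : y 1 = y' 1 := congrFun h12 0
  have h2' : y 2 = y' 2 := congrFun h12 1
  rw [eta3 y, eta3 y', h0, h1, h2']

lemma mem_im (s a b : ℝ) (hab : a ^ 2 + b ^ 2 < 1) :
    ∃ y, y ∈ Sdom c ∧ Fm c R y = Phi c R s a b := by
  refine ⟨![toIcoMod c.hL 0 s, a, b], ⟨by simpa using toIcoMod_mem' c s, by simpa using hab⟩, ?_⟩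
  rw [Fm_cons, Phi_mod]

lemma unique_pre {Ω : Set V3} (hT : IsTube c R Ω) {s a b : ℝ} (hab : a ^ 2 + b ^ 2 ≤ 1)
    {y : V3} (hy : y ∈ Scdom c) (h : Fm c R y = Phi c R s a b) :
    y = ![toIcoMod c.hL 0 s, a, b] := by
  apply inj_Fm c R hT hy
  · exact ⟨by simpa using toIcoMod_mem' c s, by simpa using hab⟩
  · rw [h, Fm_cons, Phi_mod]

lemma Xf_eval {Ω : Set V3} (hT : IsTube c R Ω) (s a b : ℝ) (hab : a ^ 2 + b ^ 2 < 1) :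
    Xf c R (Phi c R s a b) = Wf c R ![s, a, b] := by
  have hex := mem_im c R s a b hab
  rw [Xf, dif_pos hex]
  have h1 := hex.choose_spec
  have h2 : hex.choose = ![toIcoMod c.hL 0 s, a, b] :=
    unique_pre c R hT hab.le ⟨h1.1.1, h1.1.2.le⟩ h1.2
  rw [h2, Wf_mod]

end S10
namespace S10
variable (c : RegCurve) (R : ℝ)

lemma diff_χ : Differentiable ℝ c.χ := c.smooth.differentiable (by simp)

lemma det_triple (u v w : V3) :
    Matrix.det (Matrix.of fun i j => ![u, v, w] j i) = dot3 u (cross3 v w) := by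
  rw [Matrix.det_fin_three]
  simp [dot3, cross3]
  ring

lemma cross3_smul (r t : ℝ) (a b : V3) :
    cross3 (r • a) (t • b) = (r * t) • cross3 a b := by
  funext i; fin_cases i <;> · simp [cross3]; ring

lemma dot3_add_left (a b v : V3) : dot3 (a + b) v = dot3 a v + dot3 b v := by
  simp [dot3]; ring

lemma dot3_col0_Tg (y : V3) :
    dot3 (col0 c R y) (c.Tg (y 0)) = 1 - R * c.kappa (y 0) * y 1 := by
  simp only [col0, dot3_add_left, dot3_smul_left]
  have h1 : dot3 (deriv c.χ (y 0)) (c.Tg (y 0)) = 1 := c.unitSpeed (y 0)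
  have h2 : dot3 (deriv c.Nor (y 0)) (c.Tg (y 0)) = - c.kappa (y 0) := by
    rw [dot3_comm]; exact TNd c (y 0)
  have h3 : dot3 (deriv c.Binor (y 0)) (c.Tg (y 0)) = 0 := by
    rw [dot3_comm]; exact TBd c (y 0)
  rw [h1, h2, h3]
  ring

lemma det_DFL (y : V3) :
    (DFL c R y).det = R ^ 2 * (1 - R * c.kappa (y 0) * y 1) := by
  have h1 : (DFL c R y).det = LinearMap.det (Matrix.toLin' (DFmat c R y)) := rfl
  rw [h1, LinearMap.det_toLin', DFmat, det_triple, cross3_smul, NcB, dot3_smul_right,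
    dot3_col0_Tg]
  ring

lemma smooth_V3_comp {f : ℝ → V3} (hf : ContDiff ℝ (⊤ : ℕ∞) f) (i : Fin 3) :
    ContDiff ℝ (⊤ : ℕ∞) (fun z : V3 => f (z 0) i) :=
  (smooth_comp_proj hf i).comp
    (ContinuousLinearMap.proj (R := ℝ) (φ := fun _ : Fin 3 => ℝ) 0).contDiff

lemma smooth_Fm : ContDiff ℝ (⊤ : ℕ∞) (Fm c R) := by
  rw [contDiff_pi]
  intro i
  have e : (fun z : V3 => Fm c R z i) = fun z : V3 =>
      c.χ (z 0) i + (R * z 1) * c.Nor (z 0) i + (R * z 2) * c.Binor (z 0) i := rfl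
  rw [e]
  have hp : ∀ j : Fin 3, ContDiff ℝ (⊤ : ℕ∞) (fun z : V3 => z j) := fun j =>
    (ContinuousLinearMap.proj (R := ℝ) (φ := fun _ : Fin 3 => ℝ) j).contDiff
  exact ((smooth_V3_comp c.smooth i).add
    ((contDiff_const.mul (hp 1)).mul (smooth_V3_comp (smooth_Nor c) i))).add
    ((contDiff_const.mul (hp 2)).mul (smooth_V3_comp (smooth_Binor c) i))

lemma hasFDerivAt_Fm (y : V3) : HasFDerivAt (Fm c R) (DFL c R y) y := by
  rw [hasFDerivAt_pi']
  intro i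
  have hproj : ∀ j : Fin 3, HasFDerivAt (fun z : V3 => z j)
      (ContinuousLinearMap.proj (R := ℝ) (φ := fun _ : Fin 3 => ℝ) j) y :=
    fun j => by
      have h := (ContinuousLinearMap.proj (R := ℝ) (φ := fun _ : Fin 3 => ℝ) j).hasFDerivAt (x := y)
      have e : ⇑(ContinuousLinearMap.proj (R := ℝ) (φ := fun _ : Fin 3 => ℝ) j) =
          fun z : V3 => z j := rfl
      rwa [e] at h
  have hχ : HasFDerivAt (fun z : V3 => c.χ (z 0) i)
      ((deriv c.χ (y 0) i) • ContinuousLinearMap.proj (R := ℝ) (φ := fun _ : Fin 3 => ℝ) 0) y :=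
    by have := (hasDerivAt_comp_proj (diff_χ c) (y 0) i).comp_hasFDerivAt y (hproj 0); exact this
  have hN : HasFDerivAt (fun z : V3 => c.Nor (z 0) i)
      ((deriv c.Nor (y 0) i) • ContinuousLinearMap.proj (R := ℝ) (φ := fun _ : Fin 3 => ℝ) 0) y :=
    by have := (hasDerivAt_comp_proj (diff_Nor c) (y 0) i).comp_hasFDerivAt y (hproj 0); exact this
  have hB : HasFDerivAt (fun z : V3 => c.Binor (z 0) i)
      ((deriv c.Binor (y 0) i) • ContinuousLinearMap.proj (R := ℝ) (φ := fun _ : Fin 3 => ℝ) 0) y :=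
    by have := (hasDerivAt_comp_proj (diff_Binor c) (y 0) i).comp_hasFDerivAt y (hproj 0); exact this
  have h1 : HasFDerivAt (fun z : V3 => R * z 1)
      (R • ContinuousLinearMap.proj (R := ℝ) (φ := fun _ : Fin 3 => ℝ) 1) y := by
    simpa using (hproj 1).const_mul R
  have h2 : HasFDerivAt (fun z : V3 => R * z 2)
      (R • ContinuousLinearMap.proj (R := ℝ) (φ := fun _ : Fin 3 => ℝ) 2) y := by
    simpa using (hproj 2).const_mul R
  have htot := (hχ.add (h1.mul hN)).add (h2.mul hB)
  have e : (fun z : V3 => Fm c R z i) = fun z : V3 =>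
      c.χ (z 0) i + (R * z 1) * c.Nor (z 0) i + (R * z 2) * c.Binor (z 0) i := rfl
  rw [e]
  convert htot using 1
  · rfl
  apply ContinuousLinearMap.ext
  intro v
  simp [DFL, DFmat, Matrix.toLin'_apply, Matrix.mulVec, dotProduct, Matrix.vecHead,
    Matrix.vecTail, Fin.sum_univ_three, col0, ContinuousLinearMap.proj, Function.comp]
  ring

end S10
namespace S10
open Topology Filter
variable (c : RegCurve) (R : ℝ)

lemma abs1 {y : V3} (h : (y 1) ^ 2 + (y 2) ^ 2 ≤ 1) : |y 1| ≤ 1 := by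
  rw [abs_le]; constructor <;> nlinarith [sq_nonneg (y 2)]

lemma det_ne (hR : 0 < R) (hκR : c.kappaPlus * R < 1) {y : V3}
    (hy : (y 1) ^ 2 + (y 2) ^ 2 ≤ 1) : (DFL c R y).det ≠ 0 := by
  rw [det_DFL]
  have h1 := denom_pos c hR hκR (s := y 0) (abs1 hy)
  positivity

lemma dot3_basis (v : V3) (i : Fin 3) : dot3 v (basis3 i) = v i := by
  fin_cases i <;> simp [dot3, basis3, Fin.ext_iff]

lemma dot3_add_right (a b v : V3) : dot3 v (a + b) = dot3 v a + dot3 v b := by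
  simp [dot3]; ring

lemma DFL_apply (y z : V3) :
    DFL c R y z = z 0 • col0 c R y + z 1 • (R • c.Nor (y 0)) + z 2 • (R • c.Binor (y 0)) := by
  funext i
  simp [DFL, DFmat, Matrix.toLin'_apply, Matrix.mulVec, dotProduct, Matrix.vecHead,
    Matrix.vecTail, Fin.sum_univ_three, Function.comp]
  ring

lemma inv_row {y : V3} (hdet : (DFL c R y).det ≠ 0)
    (hden : 1 - R * c.kappa (y 0) * y 1 ≠ 0) (w : V3) :
    (((DFL c R y).toContinuousLinearEquivOfDetNeZero hdet).symm w) 0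
      = (1 - R * c.kappa (y 0) * y 1)⁻¹ * dot3 (c.Tg (y 0)) w := by
  set E := (DFL c R y).toContinuousLinearEquivOfDetNeZero hdet with hE
  set z := E.symm w with hz
  have hw : DFL c R y z = w := by
    have h1 := E.apply_symm_apply w
    rwa [show E (E.symm w) = DFL c R y z from rfl] at h1
  have hTw : dot3 (c.Tg (y 0)) w = z 0 * (1 - R * c.kappa (y 0) * y 1) := by
    rw [← hw, DFL_apply, dot3_add_right, dot3_add_right]
    simp only [dot3_smul_right]
    rw [show dot3 (c.Tg (y 0)) (col0 c R y) = dot3 (col0 c R y) (c.Tg (y 0)) from dot3_comm _ _,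
      dot3_col0_Tg, TN, TB]
    ring
  rw [hTw]
  field_simp

lemma local_main {Ω : Set V3} (hT : IsTube c R Ω) {q : V3} (hq : q ∈ Sdom c) :
    ContDiffAt ℝ ((⊤ : ℕ∞) : WithTop ℕ∞) (Xf c R) (Fm c R q) ∧
      curl3 (Xf c R) (Fm c R q) = 0 := by
  obtain ⟨hR, hκR, hinj, hΩeq⟩ := hT
  have hq1 : (q 1) ^ 2 + (q 2) ^ 2 < 1 := hq.2
  set p := Fm c R q with hp
  have hcd : ContDiffAt ℝ ((⊤ : ℕ∞) : WithTop ℕ∞) (Fm c R) q := (smooth_Fm c R).contDiffAt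
  set E : V3 ≃L[ℝ] V3 := (DFL c R q).toContinuousLinearEquivOfDetNeZero
    (det_ne c R hR hκR hq1.le) with hEdef
  have hEcoe : (E : V3 →L[ℝ] V3) = DFL c R q := rfl
  have hder : HasFDerivAt (Fm c R) (E : V3 →L[ℝ] V3) q := by
    rw [hEcoe]; exact hasFDerivAt_Fm c R q
  have hstrict : HasStrictFDerivAt (Fm c R) (E : V3 →L[ℝ] V3) q :=
    hcd.hasStrictFDerivAt' hder (by simp)
  set g := hstrict.localInverse (Fm c R) E q with hgdef
  have hgp : g p = q := hstrict.localInverse_apply_image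
  have hg_cd : ContDiffAt ℝ ((⊤ : ℕ∞) : WithTop ℕ∞) g p := hcd.to_localInverse hder (by simp)
  have hrt : ∀ᶠ x in 𝓝 p, Fm c R (g x) = x := hstrict.eventually_right_inverse
  have hgc : ContinuousAt g p := hstrict.localInverse_continuousAt
  have hU : ∀ᶠ x in 𝓝 p, (g x 1) ^ 2 + (g x 2) ^ 2 < 1 := by
    have hU_open : IsOpen {y : V3 | (y 1) ^ 2 + (y 2) ^ 2 < 1} :=
      isOpen_lt (((continuous_apply (1 : Fin 3)).pow 2).add
        ((continuous_apply (2 : Fin 3)).pow 2)) continuous_const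
    have hmem : g p ∈ {y : V3 | (y 1) ^ 2 + (y 2) ^ 2 < 1} := by rw [hgp]; exact hq1
    exact hgc.preimage_mem_nhds (hU_open.mem_nhds hmem)
  have hXW : ∀ᶠ x in 𝓝 p, Xf c R x = Wf c R (g x) := by
    filter_upwards [hrt, hU] with x h1 h2
    have h3 : Xf c R (Fm c R (g x)) = Wf c R ![g x 0, g x 1, g x 2] :=
      Xf_eval c R ⟨hR, hκR, hinj, hΩeq⟩ (g x 0) (g x 1) (g x 2) h2
    rw [h1] at h3
    rw [h3, ← eta3]
  -- smoothness of Wf at q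
  have hdenq : 0 < 1 - R * c.kappa (q 0) * q 1 := denom_pos c hR hκR (abs1 hq1.le)
  have hW_cd : ContDiffAt ℝ ((⊤ : ℕ∞) : WithTop ℕ∞) (Wf c R) q := by
    have hκ0 : ContDiff ℝ ((⊤ : ℕ∞) : WithTop ℕ∞) (fun y : V3 => c.kappa (y 0)) :=
      (smooth_kappa c).comp (ContinuousLinearMap.proj (R := ℝ) (φ := fun _ : Fin 3 => ℝ) 0).contDiff
    have hden_cd : ContDiffAt ℝ ((⊤ : ℕ∞) : WithTop ℕ∞)
        (fun y : V3 => (c.L * (1 - R * c.kappa (y 0) * y 1))⁻¹) q := by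
      apply ContDiffAt.inv
      · exact (contDiffAt_const.mul (contDiffAt_const.sub
          ((contDiffAt_const.mul hκ0.contDiffAt).mul
            ((ContinuousLinearMap.proj (R := ℝ) (φ := fun _ : Fin 3 => ℝ) 1).contDiff.contDiffAt))))
      · exact mul_ne_zero c.hL.ne' hdenq.ne'
    exact hden_cd.smul (((smooth_Tg c).comp
      (ContinuousLinearMap.proj (R := ℝ) (φ := fun _ : Fin 3 => ℝ) 0).contDiff).contDiffAt)
  have hXsm : ContDiffAt ℝ ((⊤ : ℕ∞) : WithTop ℕ∞) (Xf c R) p := by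
    have hcomp : ContDiffAt ℝ ((⊤ : ℕ∞) : WithTop ℕ∞) (Wf c R ∘ g) p := by
      apply ContDiffAt.comp
      · rw [hgp]; exact hW_cd
      · exact hg_cd
    exact hcomp.congr_of_eventuallyEq hXW
  -- the local potential
  set h : V3 → ℝ := fun x => c.L⁻¹ * g x 0 with hhdef
  have hh_cd : ContDiffAt ℝ ((⊤ : ℕ∞) : WithTop ℕ∞) h p :=
    contDiffAt_const.mul
      (((ContinuousLinearMap.proj (R := ℝ) (φ := fun _ : Fin 3 => ℝ) 0).contDiff.contDiffAt).comp p hg_cd)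
  have h2top : (2 : WithTop ℕ∞) ≠ ((⊤ : ℕ∞) : WithTop ℕ∞) := by decide
  have hev_cont : ∀ᶠ x in 𝓝 p, ContinuousAt g x := by
    have h2 : ContDiffAt ℝ 2 g p := hg_cd.of_le two_le_inf
    filter_upwards [h2.eventually h2top] with x hx
    exact hx.continuousAt
  have hev_rt2 : ∀ᶠ x in 𝓝 p, ∀ᶠ z in 𝓝 x, Fm c R (g z) = z := hrt.eventually_nhds
  have hgrad : ∀ᶠ x in 𝓝 p, grad3 h x = Wf c R (g x) := by
    filter_upwards [hU, hev_cont, hev_rt2] with x hx2 hx3 hx4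
    have hdet' := det_ne c R hR hκR (y := g x) hx2.le
    set Ex := (DFL c R (g x)).toContinuousLinearEquivOfDetNeZero hdet' with hExdef
    have hFd : HasFDerivAt (Fm c R) (Ex : V3 →L[ℝ] V3) (g x) := by
      rw [show (Ex : V3 →L[ℝ] V3) = DFL c R (g x) from rfl]
      exact hasFDerivAt_Fm c R (g x)
    have hgd : HasFDerivAt g ((Ex.symm : V3 →L[ℝ] V3)) x :=
      hFd.of_local_left_inverse hx3 hx4
    have hhd : HasFDerivAt h (c.L⁻¹ •
        ((ContinuousLinearMap.proj (R := ℝ) (φ := fun _ : Fin 3 => ℝ) 0).comp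
          (Ex.symm : V3 →L[ℝ] V3))) x :=
      (hasFDerivAt_pi'.1 hgd 0).const_mul c.L⁻¹
    have hdenx : 0 < 1 - R * c.kappa (g x 0) * (g x 1) := denom_pos c hR hκR (abs1 hx2.le)
    funext i
    show fderiv ℝ h x (basis3 i) = Wf c R (g x) i
    rw [hhd.fderiv]
    have hrow := inv_row c R hdet' hdenx.ne' (basis3 i)
    rw [← hExdef] at hrow
    show c.L⁻¹ * Ex.symm (basis3 i) 0 = Wf c R (g x) i
    rw [hrow, dot3_basis]
    simp only [Wf, Pi.smul_apply, smul_eq_mul, mul_inv]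
    ring
  have hXgrad : ∀ᶠ x in 𝓝 p, Xf c R x = grad3 h x := by
    filter_upwards [hXW, hgrad] with x h1 h2
    rw [h1, ← h2]
  have hf'diff : DifferentiableAt ℝ (fderiv ℝ h) p := by
    have h1 : ContDiffAt ℝ 1 (fderiv ℝ h) p := by
      apply hh_cd.fderiv_right
      rw [show (1 : WithTop ℕ∞) + 1 = 2 from by norm_num]
      exact two_le_inf
    exact h1.differentiableAt one_ne_zero
  have hsym : ∀ v w, (fderiv ℝ (fderiv ℝ h) p v) w = (fderiv ℝ (fderiv ℝ h) p w) v := by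
    have h2 : ContDiffAt ℝ 2 h p := hh_cd.of_le two_le_inf
    have hev : ∀ᶠ z in 𝓝 p, HasFDerivAt h (fderiv ℝ h z) z := by
      filter_upwards [h2.eventually h2top] with z hz
      exact (hz.differentiableAt two_ne_zero).hasFDerivAt
    exact second_derivative_symmetric_of_eventually hev hf'diff.hasFDerivAt
  have hcomp : ∀ i j : Fin 3, pderiv3 i (fun z => Xf c R z j) p
      = (fderiv ℝ (fderiv ℝ h) p (basis3 i)) (basis3 j) := by
    intro i j
    have he : (fun z => Xf c R z j) =ᶠ[𝓝 p] (fun z => grad3 h z j) := by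
      filter_upwards [hXgrad] with z hz; rw [hz]
    rw [pderiv3, he.fderiv_eq]
    have h2 := hf'diff.hasFDerivAt.clm_apply (hasFDerivAt_const (basis3 j) p)
    have h3 : (fun z => grad3 h z j) = fun z => fderiv ℝ h z (basis3 j) := rfl
    rw [h3, h2.fderiv]
    simp
  refine ⟨hXsm, ?_⟩
  funext i
  fin_cases i <;>
  · show _ - _ = _
    rw [hcomp, hcomp, hsym]
    simp

end S10
namespace S10
variable (c : RegCurve) (R : ℝ)

lemma Xf_on_curve {Ω : Set V3} (hT : IsTube c R Ω) (s : ℝ) :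
    Xf c R (c.χ s) = c.L⁻¹ • c.Tg s := by
  have h0 : c.χ s = Phi c R s 0 0 := by simp [Phi]
  rw [h0, Xf_eval c R hT s 0 0 (by norm_num)]
  simp [Wf]

lemma circulation {Ω : Set V3} (hT : IsTube c R Ω) :
    ∫ s in (0:ℝ)..c.L, dot3 (Xf c R (c.χ s)) (deriv c.χ s) = 1 := by
  have hpt : ∀ s, dot3 (Xf c R (c.χ s)) (deriv c.χ s) = c.L⁻¹ := by
    intro s
    rw [Xf_on_curve c R hT s, dot3_smul_left]
    have := c.unitSpeed s
    simp only [RegCurve.Tg]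
    rw [this, mul_one]
  rw [intervalIntegral.integral_congr (g := fun _ => c.L⁻¹) (fun s _ => hpt s)]
  simp only [intervalIntegral.integral_const, smul_eq_mul, sub_zero]
  exact mul_inv_cancel₀ c.hL.ne'

lemma contDiffOn_Xf {Ω : Set V3} (hT : IsTube c R Ω) :
    ContDiffOn ℝ (⊤ : ℕ∞) (Xf c R) Ω := by
  intro x hx
  rw [Ω_eq c R hT] at hx
  obtain ⟨y, hy, rfl⟩ := hx
  exact ((local_main c R hT hy).1).contDiffWithinAt

lemma curl_zero {Ω : Set V3} (hT : IsTube c R Ω) : ∀ x ∈ Ω, curl3 (Xf c R) x = 0 := by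
  intro x hx
  rw [Ω_eq c R hT] at hx
  obtain ⟨y, hy, rfl⟩ := hx
  exact (local_main c R hT hy).2

end S10
namespace S10
open Topology Filter intervalIntegral

lemma Fcont {a : ℝ} (ha0 : 0 ≤ a) (ha : a < 1) :
    ContinuousOn (fun u : ℝ => 2 * Real.sqrt (1 - u ^ 2) * (1 - a * u)⁻¹) (Icc (-1) 1) := by
  apply ContinuousOn.mul
  · exact (continuous_const.mul (Real.continuous_sqrt.comp
      (continuous_const.sub (continuous_pow 2)))).continuousOn
  · apply ContinuousOn.inv₀
    · exact (continuous_const.sub (continuous_const.mul continuous_id)).continuousOn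
    · intro u hu
      have h1 : a * u ≤ a := by nlinarith [hu.1, hu.2]
      nlinarith

lemma key1D {a : ℝ} (ha0 : 0 ≤ a) (ha : a < 1) :
    (∫ u in (-1:ℝ)..1, 2 * Real.sqrt (1 - u ^ 2) * (1 - a * u)⁻¹) ≤ 2 * π := by
  set F : ℝ → ℝ := fun u => 2 * Real.sqrt (1 - u ^ 2) * (1 - a * u)⁻¹ with hF
  have hFc : ContinuousOn F (Icc (-1) 1) := Fcont ha0 ha
  have hmaps : ∀ x : ℝ, Real.sin x ∈ Icc (-1 : ℝ) 1 :=
    fun x => ⟨Real.neg_one_le_sin x, Real.sin_le_one x⟩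
  have hmaps' : ∀ x : ℝ, - Real.sin x ∈ Icc (-1 : ℝ) 1 := by
    intro x
    have h := hmaps x
    exact ⟨by linarith [h.2], by linarith [h.1]⟩
  have hsub : ∫ x in (-(π/2) : ℝ)..(π/2), Real.cos x • (F ∘ Real.sin) x
      = ∫ u in Real.sin (-(π/2)).. Real.sin (π/2), F u := by
    apply intervalIntegral.integral_comp_smul_deriv'' Real.continuous_sin.continuousOn
    · intro x _
      exact (Real.hasDerivAt_sin x).hasDerivWithinAt
    · exact Real.continuous_cos.continuousOn
    · apply hFc.mono
      rintro _ ⟨x, _, rfl⟩; exact hmaps x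
  rw [Real.sin_pi_div_two] at hsub
  rw [show Real.sin (-(π/2)) = -1 by rw [Real.sin_neg, Real.sin_pi_div_two]] at hsub
  rw [← hsub]
  set f : ℝ → ℝ := fun x => Real.cos x • (F ∘ Real.sin) x with hf
  have hfc : ContinuousOn f (Set.uIcc (-(π/2)) (π/2)) := by
    apply ContinuousOn.smul Real.continuous_cos.continuousOn
    exact hFc.comp Real.continuous_sin.continuousOn (fun x _ => hmaps x)
  have hint1 : IntervalIntegrable f volume (-(π/2)) (π/2) := hfc.intervalIntegrable
  have hg2c : ContinuousOn (fun x => Real.cos x * F (- Real.sin x))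
      (Set.uIcc (-(π/2)) (π/2)) := by
    apply ContinuousOn.mul Real.continuous_cos.continuousOn
    exact hFc.comp (Real.continuous_sin.neg).continuousOn (fun x _ => hmaps' x)
  have hint2 : IntervalIntegrable (fun x => Real.cos x * F (- Real.sin x)) volume
      (-(π/2)) (π/2) := hg2c.intervalIntegrable
  -- symmetrization
  have hJneg : (∫ x in (-(π/2) : ℝ)..(π/2), f x)
      = ∫ x in (-(π/2) : ℝ)..(π/2), Real.cos x * F (- Real.sin x) := by
    have h1 := intervalIntegral.integral_comp_neg (a := -(π/2)) (b := π/2) f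
    rw [neg_neg] at h1
    rw [← h1]
    congr 1
    funext x
    simp only [hf, Function.comp, Real.cos_neg, Real.sin_neg, smul_eq_mul]
  have hptw : ∀ x ∈ Icc (-(π/2) : ℝ) (π/2),
      f x + Real.cos x * F (- Real.sin x) ≤ 4 := by
    intro x hx
    have hc : 0 ≤ Real.cos x := Real.cos_nonneg_of_mem_Icc hx
    have hs2 : Real.sin x ^ 2 + Real.cos x ^ 2 = 1 := Real.sin_sq_add_cos_sq x
    have hsq : Real.sqrt (1 - Real.sin x ^ 2) = Real.cos x := by
      rw [show (1 : ℝ) - Real.sin x ^ 2 = Real.cos x ^ 2 by linarith]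
      exact Real.sqrt_sq hc
    have hb := hmaps x
    have hd1 : 0 < 1 - a * Real.sin x := by nlinarith [hb.1, hb.2]
    have hd2 : 0 < 1 + a * Real.sin x := by nlinarith [hb.1, hb.2]
    have hfx : f x = Real.cos x * (2 * Real.cos x * (1 - a * Real.sin x)⁻¹) := by
      simp only [hf, hF, Function.comp, smul_eq_mul, hsq]
    have hfx2 : Real.cos x * F (- Real.sin x)
        = Real.cos x * (2 * Real.cos x * (1 + a * Real.sin x)⁻¹) := by
      simp only [hF, neg_sq, hsq]
      ring_nf
    rw [hfx, hfx2]
    have hkey : Real.cos x * (2 * Real.cos x * (1 - a * Real.sin x)⁻¹)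
        + Real.cos x * (2 * Real.cos x * (1 + a * Real.sin x)⁻¹)
        = 4 * Real.cos x ^ 2 / ((1 - a * Real.sin x) * (1 + a * Real.sin x)) := by
      field_simp
      ring
    rw [hkey, div_le_iff₀ (mul_pos hd1 hd2)]
    have ha2 : a ^ 2 ≤ 1 := by nlinarith
    nlinarith [mul_le_mul_of_nonneg_right ha2 (sq_nonneg (Real.sin x)), hs2]
  have hsum : (∫ x in (-(π/2) : ℝ)..(π/2), f x)
      + (∫ x in (-(π/2) : ℝ)..(π/2), Real.cos x * F (- Real.sin x))
      ≤ 4 * π := by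
    rw [← intervalIntegral.integral_add hint1 hint2]
    have hle : (-(π/2) : ℝ) ≤ π/2 := by linarith [Real.pi_pos]
    calc (∫ x in (-(π/2) : ℝ)..(π/2), (f x + Real.cos x * F (- Real.sin x)))
        ≤ ∫ _x in (-(π/2) : ℝ)..(π/2), (4 : ℝ) := by
          apply intervalIntegral.integral_mono_on hle (hint1.add hint2)
            intervalIntegrable_const hptw
      _ = 4 * π := by
          simp [intervalIntegral.integral_const]
          ring
  rw [hJneg] at hsum ⊢
  linarith [hsum]

end S10
namespace S10
open Topology Filter

lemma sqrt_slice (u : ℝ) :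
    (volume {v : ℝ | u ^ 2 + v ^ 2 < 1}).toReal = 2 * Real.sqrt (1 - u ^ 2) := by
  by_cases h : u ^ 2 < 1
  · have hpos : 0 < 1 - u ^ 2 := by linarith
    have hr : 0 < Real.sqrt (1 - u ^ 2) := Real.sqrt_pos.2 hpos
    have hsq : Real.sqrt (1 - u ^ 2) ^ 2 = 1 - u ^ 2 := Real.sq_sqrt hpos.le
    have hset : {v : ℝ | u ^ 2 + v ^ 2 < 1}
        = Ioo (-Real.sqrt (1 - u ^ 2)) (Real.sqrt (1 - u ^ 2)) := by
      ext v
      simp only [mem_setOf_eq, mem_Ioo]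
      constructor
      · intro hv
        constructor <;> nlinarith [sq_nonneg (v - Real.sqrt (1 - u ^ 2)),
          sq_nonneg (v + Real.sqrt (1 - u ^ 2))]
      · rintro ⟨h1, h2⟩
        nlinarith
    rw [hset, Real.volume_Ioo, ENNReal.toReal_ofReal (by linarith)]
    ring
  · have hset : {v : ℝ | u ^ 2 + v ^ 2 < 1} = (∅ : Set ℝ) := by
      ext v
      simp only [mem_setOf_eq, mem_empty_iff_false, iff_false, not_lt]
      nlinarith [sq_nonneg v]
    rw [hset]
    rw [Real.sqrt_eq_zero'.2 (by linarith)]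
    simp

lemma disc_int_le {a : ℝ} (ha0 : 0 ≤ a) (ha : a < 1) :
    (∫ x in openDisc2, (1 - a * x 0)⁻¹) ≤ 2 * π := by
  set D : Set (ℝ × ℝ) := {p | p.1 ^ 2 + p.2 ^ 2 < 1} with hD
  have hDm : MeasurableSet D :=
    measurableSet_lt ((measurable_fst.pow_const 2).add (measurable_snd.pow_const 2))
      measurable_const
  have hpre : openDisc2 = (MeasurableEquiv.piFinTwo (fun _ : Fin 2 => ℝ)) ⁻¹' D := by
    ext x
    simp [openDisc2, hD, MeasurableEquiv.piFinTwo_apply]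
  have htrans : (∫ x in openDisc2, (1 - a * x 0)⁻¹) = ∫ p in D, (1 - a * p.1)⁻¹ := by
    rw [hpre]
    exact (volume_preserving_piFinTwo (fun _ : Fin 2 => ℝ)).setIntegral_preimage_emb
      (MeasurableEquiv.measurableEmbedding _) (fun p => (1 - a * p.1)⁻¹) D
  rw [htrans]
  have hmble : Measurable fun p : ℝ × ℝ => (1 - a * p.1)⁻¹ :=
    (measurable_const.sub (measurable_fst.const_mul a)).inv
  have hDsub : D ⊆ Ioo (-1:ℝ) 1 ×ˢ Ioo (-1:ℝ) 1 := by
    rintro ⟨u, v⟩ h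
    simp only [hD, mem_setOf_eq] at h
    constructor <;> constructor <;> · simp only []; nlinarith [sq_nonneg u, sq_nonneg v]
  have hDfin : volume D ≠ ⊤ := by
    apply ne_top_of_le_ne_top _ (measure_mono hDsub)
    rw [Measure.volume_eq_prod, Measure.prod_prod, Real.volume_Ioo]
    exact ENNReal.mul_ne_top ENNReal.ofReal_ne_top ENNReal.ofReal_ne_top
  have hbdd : ∀ p ∈ D, ‖(1 - a * p.1)⁻¹‖ ≤ (1 - a)⁻¹ := by
    rintro ⟨u, v⟩ h
    simp only [hD, mem_setOf_eq] at h
    have hu : |u| < 1 := by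
      rw [abs_lt]; constructor <;> nlinarith [sq_nonneg v]
    have h1 : a * u ≤ a := by nlinarith [le_abs_self u, abs_nonneg u]
    have h2 : 0 < 1 - a * u := by nlinarith [neg_abs_le u]
    rw [Real.norm_eq_abs, abs_of_pos (inv_pos.2 h2)]
    exact inv_anti₀ (by linarith) (by linarith)
  have hIntOn : IntegrableOn (fun p : ℝ × ℝ => (1 - a * p.1)⁻¹) D :=
    Measure.integrableOn_of_bounded hDfin hmble.aestronglyMeasurable
      ((ae_restrict_iff' hDm).2 (Filter.Eventually.of_forall hbdd))
  rw [← MeasureTheory.integral_indicator hDm]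
  have hIndInt : Integrable (D.indicator fun p : ℝ × ℝ => (1 - a * p.1)⁻¹)
      (volume.prod volume) := by
    rw [← Measure.volume_eq_prod]
    exact (integrable_indicator_iff hDm).2 hIntOn
  rw [show (volume : Measure (ℝ × ℝ)) = volume.prod volume from Measure.volume_eq_prod ℝ ℝ,
    MeasureTheory.integral_prod _ hIndInt]
  have hinner : ∀ u : ℝ, (∫ v, D.indicator (fun p : ℝ × ℝ => (1 - a * p.1)⁻¹) (u, v))
      = 2 * Real.sqrt (1 - u ^ 2) * (1 - a * u)⁻¹ := by
    intro u
    have hslice_m : MeasurableSet {v : ℝ | u ^ 2 + v ^ 2 < 1} :=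
      measurableSet_lt (measurable_const.add (measurable_id.pow_const 2)) measurable_const
    have hrw : (fun v => D.indicator (fun p : ℝ × ℝ => (1 - a * p.1)⁻¹) (u, v))
        = ({v : ℝ | u ^ 2 + v ^ 2 < 1}).indicator (fun _ => (1 - a * u)⁻¹) := by
      funext v
      by_cases h : u ^ 2 + v ^ 2 < 1
      · rw [Set.indicator_of_mem (show (u, v) ∈ D from h),
          Set.indicator_of_mem (show v ∈ {v : ℝ | u ^ 2 + v ^ 2 < 1} from h)]
      · rw [Set.indicator_of_notMem (show (u, v) ∉ D from h),
          Set.indicator_of_notMem (show v ∉ {v : ℝ | u ^ 2 + v ^ 2 < 1} from h)]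
    rw [hrw, MeasureTheory.integral_indicator hslice_m, MeasureTheory.setIntegral_const,
      measureReal_def, sqrt_slice, smul_eq_mul]
  rw [show (fun u : ℝ => ∫ v, D.indicator (fun p : ℝ × ℝ => (1 - a * p.1)⁻¹) (u, v))
      = fun u : ℝ => 2 * Real.sqrt (1 - u ^ 2) * (1 - a * u)⁻¹ from funext hinner]
  have hzero : ∀ u ∉ Ioo (-1:ℝ) 1, 2 * Real.sqrt (1 - u ^ 2) * (1 - a * u)⁻¹ = 0 := by
    intro u hu
    simp only [mem_Ioo, not_and_or, not_lt] at hu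
    have h1 : 1 - u ^ 2 ≤ 0 := by
      rcases hu with h | h <;> nlinarith
    rw [Real.sqrt_eq_zero'.2 h1]
    ring
  rw [← MeasureTheory.setIntegral_eq_integral_of_forall_compl_eq_zero hzero,
    ← MeasureTheory.integral_Ioc_eq_integral_Ioo,
    ← intervalIntegral.integral_of_le (by norm_num : (-1:ℝ) ≤ 1)]
  exact key1D ha0 ha

end S10
namespace S10
open Topology Filter

variable (c : RegCurve) (R : ℝ)

lemma Xf_on_Sdom {Ω : Set V3} (hT : IsTube c R Ω) {y : V3} (hy : y ∈ Sdom c) :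
    Xf c R (Fm c R y) = Wf c R y := by
  have h := Xf_eval c R hT (y 0) (y 1) (y 2) hy.2
  rw [show Phi c R (y 0) (y 1) (y 2) = Fm c R y from rfl] at h
  rw [h, ← eta3]

lemma meas_Sdom : MeasurableSet (Sdom c) := by
  have h : Sdom c = ((fun y : V3 => y 0) ⁻¹' (Ico 0 c.L))
      ∩ {y : V3 | (y 1) ^ 2 + (y 2) ^ 2 < 1} := rfl
  rw [h]
  exact ((measurable_pi_apply 0) measurableSet_Ico).inter
    (measurableSet_lt (((measurable_pi_apply 1).pow_const 2).add
      ((measurable_pi_apply 2).pow_const 2)) measurable_const)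

lemma l2_eq {Ω : Set V3} (hT : IsTube c R Ω) :
    l2normSq Ω (Xf c R)
      = ∫ y in Sdom c, R ^ 2 * (c.L ^ 2)⁻¹ * (1 - R * c.kappa (y 0) * y 1)⁻¹ := by
  have hR := hT.1
  have hκR := hT.2.1
  have hcov := MeasureTheory.integral_image_eq_integral_abs_det_fderiv_smul volume (meas_Sdom c)
    (fun y _ => (hasFDerivAt_Fm c R y).hasFDerivWithinAt)
    ((inj_Fm c R hT).mono (fun y hy => (⟨hy.1, hy.2.le⟩ : y ∈ Scdom c)))
    (fun x => dot3 (Xf c R x) (Xf c R x))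
  rw [l2normSq, Ω_eq c R hT, hcov]
  apply MeasureTheory.setIntegral_congr_fun (meas_Sdom c)
  intro y hy
  have hXF := Xf_on_Sdom c R hT hy
  have hd : 0 < 1 - R * c.kappa (y 0) * y 1 := denom_pos c hR hκR (abs1 hy.2.le)
  have hdot : dot3 (Wf c R y) (Wf c R y)
      = ((c.L * (1 - R * c.kappa (y 0) * y 1))⁻¹) ^ 2 := by
    simp only [Wf, dot3_smul_left, dot3_smul_right]
    rw [show dot3 (c.Tg (y 0)) (c.Tg (y 0)) = 1 from c.unitSpeed (y 0)]
    ring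
  simp only [det_DFL, hXF, hdot, smul_eq_mul]
  rw [abs_of_pos (by positivity)]
  have hL := c.hL
  field_simp

lemma openDisc2_meas : MeasurableSet openDisc2 :=
  measurableSet_lt (((measurable_pi_apply 0).pow_const 2).add
    ((measurable_pi_apply 1).pow_const 2)) measurable_const

lemma openDisc2_vol : volume openDisc2 ≠ ⊤ := by
  have hsub : openDisc2 ⊆ Set.pi univ (fun _ : Fin 2 => Ioo (-1:ℝ) 1) := by
    intro x hx
    have h : x 0 ^ 2 + x 1 ^ 2 < 1 := hx
    have hb0 : x 0 ^ 2 < 1 := by nlinarith [sq_nonneg (x 1)]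
    have hb1 : x 1 ^ 2 < 1 := by nlinarith [sq_nonneg (x 0)]
    intro i _
    have hi : x i ^ 2 < 1 := by
      fin_cases i
      · exact hb0
      · exact hb1
    constructor <;> nlinarith [hi]
  apply ne_top_of_le_ne_top _ (measure_mono hsub)
  rw [MeasureTheory.volume_pi_pi]
  simp [Real.volume_Ioo]

lemma l2_le {Ω : Set V3} (hT : IsTube c R Ω) :
    l2normSq Ω (Xf c R) ≤ 2 * π * R ^ 2 / c.L := by
  rw [l2_eq c R hT]
  have hR := hT.1
  have hκR := hT.2.1
  set G' : ℝ × V2 → ℝ := fun z => R ^ 2 * (c.L ^ 2)⁻¹ * (1 - R * c.kappa z.1 * z.2 0)⁻¹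
    with hG'
  have hpre : Sdom c = (MeasurableEquiv.piFinSuccAbove (fun _ : Fin 3 => ℝ) 0) ⁻¹'
      ((Ico 0 c.L) ×ˢ openDisc2) := by
    ext y
    exact Iff.rfl
  have h1 : (∫ y in Sdom c, R ^ 2 * (c.L ^ 2)⁻¹ * (1 - R * c.kappa (y 0) * y 1)⁻¹)
      = ∫ z in (Ico 0 c.L) ×ˢ openDisc2, G' z := by
    rw [hpre]
    rw [← (volume_preserving_piFinSuccAbove (fun _ : Fin 3 => ℝ) 0).setIntegral_preimage_emb
      (MeasurableEquiv.measurableEmbedding _) G' ((Ico 0 c.L) ×ˢ openDisc2)]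
    apply MeasureTheory.setIntegral_congr_fun
    · rw [← hpre]; exact meas_Sdom c
    · intro y _
      rfl
  rw [h1]
  -- integrability of G' on the product set
  have hκcont := (smooth_kappa c).continuous
  have hmble : Measurable G' := by
    apply Measurable.mul measurable_const
    apply Measurable.inv
    exact measurable_const.sub (((hκcont.measurable.comp measurable_fst).const_mul R).mul
      ((measurable_pi_apply 0).comp measurable_snd))
  have hprodmeas : MeasurableSet ((Ico 0 c.L) ×ˢ openDisc2) :=
    measurableSet_Ico.prod (openDisc2_meas)
  have hfin : volume ((Ico 0 c.L) ×ˢ openDisc2) ≠ ⊤ := by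
    rw [Measure.volume_eq_prod, Measure.prod_prod]
    exact ENNReal.mul_ne_top (by rw [Real.volume_Ico]; exact ENNReal.ofReal_ne_top)
      (openDisc2_vol)
  have hbdd : ∀ z ∈ (Ico 0 c.L) ×ˢ openDisc2,
      ‖G' z‖ ≤ R ^ 2 * (c.L ^ 2)⁻¹ * (1 - c.kappaPlus * R)⁻¹ := by
    rintro ⟨s, x⟩ hz
    have hx : x 0 ^ 2 + x 1 ^ 2 < 1 := hz.2
    have hx1 : |x 0| ≤ 1 := by
      rw [abs_le]; constructor <;> nlinarith [sq_nonneg (x 1)]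
    have hd : 0 < 1 - R * c.kappa s * x 0 := denom_pos c hR hκR (x1 := x 0) hx1
    have hd2 : 1 - c.kappaPlus * R ≤ 1 - R * c.kappa s * x 0 := by
      have hk1 := kappa_le c s
      have hk2 := kappa_pos c s
      have e1 : R * c.kappa s * x 0 ≤ R * c.kappa s * |x 0| :=
        mul_le_mul_of_nonneg_left (le_abs_self _) (by positivity)
      have e2 : R * c.kappa s * |x 0| ≤ R * c.kappa s :=
        mul_le_of_le_one_right (by positivity) hx1
      have e3 : R * c.kappa s ≤ R * c.kappaPlus := mul_le_mul_of_nonneg_left hk1 hR.le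
      rw [mul_comm c.kappaPlus R]
      linarith
    have hd3 : 0 < 1 - c.kappaPlus * R := by linarith [hκR]
    simp only [hG', Real.norm_eq_abs]
    rw [abs_of_pos (mul_pos (mul_pos (pow_pos hR 2) (inv_pos.2 (pow_pos c.hL 2)))
      (inv_pos.2 hd))]
    have : (1 - R * c.kappa s * x 0)⁻¹ ≤ (1 - c.kappaPlus * R)⁻¹ :=
      inv_anti₀ hd3 hd2
    have hC : (0:ℝ) ≤ R ^ 2 * (c.L ^ 2)⁻¹ := by positivity
    exact mul_le_mul_of_nonneg_left this hC
  have hIntOn : IntegrableOn G' ((Ico 0 c.L) ×ˢ openDisc2) :=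
    Measure.integrableOn_of_bounded hfin hmble.aestronglyMeasurable
      ((ae_restrict_iff' hprodmeas).2 (Filter.Eventually.of_forall hbdd))
  have hIntOn' : IntegrableOn G' ((Ico 0 c.L) ×ˢ openDisc2) (volume.prod volume) := by
    rw [← Measure.volume_eq_prod]; exact hIntOn
  rw [show (volume : Measure (ℝ × V2)) = volume.prod volume from Measure.volume_eq_prod _ _,
    MeasureTheory.setIntegral_prod _ hIntOn']
  have hinner_le : ∀ s ∈ Ico 0 c.L,
      (∫ x in openDisc2, G' (s, x)) ≤ R ^ 2 * (c.L ^ 2)⁻¹ * (2 * π) := by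
    intro s _
    have he : (fun x : V2 => G' (s, x))
        = fun x => R ^ 2 * (c.L ^ 2)⁻¹ * (1 - (R * c.kappa s) * x 0)⁻¹ := rfl
    rw [he]
    rw [MeasureTheory.integral_const_mul]
    have ha0 : 0 ≤ R * c.kappa s := mul_nonneg hR.le (kappa_pos c s).le
    have ha1 : R * c.kappa s < 1 := by
      have := kappa_le c s
      have := kappaPlus_nonneg c
      nlinarith
    exact mul_le_mul_of_nonneg_left (disc_int_le ha0 ha1) (by positivity)
  have houter_int : Integrable (fun s => ∫ x in openDisc2, G' (s, x))
      (volume.restrict (Ico 0 c.L)) := by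
    have h2 : Integrable G' ((volume.restrict (Ico 0 c.L)).prod
        (volume.restrict openDisc2)) := by
      rw [Measure.prod_restrict]; exact hIntOn'
    exact h2.integral_prod_left
  calc (∫ s in Ico 0 c.L, ∫ x in openDisc2, G' (s, x))
      ≤ ∫ _s in Ico 0 c.L, R ^ 2 * (c.L ^ 2)⁻¹ * (2 * π) := by
        apply MeasureTheory.setIntegral_mono_on houter_int
          ((MeasureTheory.integrableOn_const_iff (C := R ^ 2 * (c.L ^ 2)⁻¹ * (2 * π))).2 (Or.inr (by
            rw [Real.volume_Ico]; exact ENNReal.ofReal_lt_top)))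
          measurableSet_Ico hinner_le
    _ = c.L * (R ^ 2 * (c.L ^ 2)⁻¹ * (2 * π)) := by
        rw [MeasureTheory.setIntegral_const, measureReal_def, smul_eq_mul, Real.volume_Ico,
          ENNReal.toReal_ofReal (by linarith [c.hL])]
        ring_nf
    _ = 2 * π * R ^ 2 / c.L := by
        have hL := c.hL
        field_simp

end S10
/-- On a tubular neighbourhood `Ω` of radius `R` around a regular smooth
closed curve `χ` of length `L`, there is a smooth curl-free vector field `X` on `Ω` with
unit circulation along `χ` and `‖X‖_{L²(Ω)} ≤ R·√(2π/L)`. -/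
theorem exists_curlfree_comparison_field_tube (c : RegCurve) (R : ℝ) (Ω : Set V3)
    (hT : IsTube c R Ω) :
    ∃ X : V3 → V3, ContDiffOn ℝ (⊤ : ℕ∞) X Ω ∧
      (∀ x ∈ Ω, curl3 X x = 0) ∧
      (∫ s in (0:ℝ)..c.L, dot3 (X (c.χ s)) (deriv c.χ s) = 1) ∧
      Real.sqrt (l2normSq Ω X) ≤ R * Real.sqrt (2 * π / c.L) := by
  refine ⟨S10.Xf c R, S10.contDiffOn_Xf c R hT, S10.curl_zero c R hT,
    S10.circulation c R hT, ?_⟩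
  have h1 := S10.l2_le c R hT
  have h2 : Real.sqrt (l2normSq Ω (S10.Xf c R)) ≤ Real.sqrt (2 * π * R ^ 2 / c.L) :=
    Real.sqrt_le_sqrt h1
  apply le_trans h2
  rw [show 2 * π * R ^ 2 / c.L = R ^ 2 * (2 * π / c.L) by ring,
    Real.sqrt_mul (sq_nonneg R), Real.sqrt_sq hT.1.le]
end
end

section
/- Let Ω ⊂ ℝ³ be a bounded smooth domain whose closure is disjoint from the z-axis and which is rotationally symmetric about the z-axis (every rotation of ℝ³ fixing the z-axis pointwise maps Ω onto itself). Define Γ(x,y,z) := (−y, x, 0)/(x²+y²) on Ω. Then the helicity of Γ vanishes: H(Γ) = (1/4π)∫_Ω∫_Ω Γ(p)·(Γ(q) × (p−q)/|p−q|³) d³q d³p = 0. -/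
open MeasureTheory Set Real

noncomputable section

/-- Rotation of `ℝ³` by angle `θ` about the `z`-axis. -/
def rotZ (θ : ℝ) (w : V3) : V3 :=
  ![Real.cos θ * w 0 - Real.sin θ * w 1, Real.sin θ * w 0 + Real.cos θ * w 1, w 2]

/-!
The reflection `R : (x, y, z) ↦ (x, -y, z)` preserves volume and agrees at each point with
some rotation about the `z`-axis, so it maps an axisymmetric `Ω` onto itself. Being
orientation reversing, it flips the sign of cross products, while `Γ ∘ R = -R ∘ Γ`. Hence the
helicity integrand is odd under `(p, q) ↦ (R p, R q)`, and the double integral over the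
invariant set `Ω × Ω` equals its own negative; the change of variables needs no integrability.
-/

def reflXZ (w : V3) : V3 := ![w 0, -(w 1), w 2]

theorem reflXZ_involutive : Function.Involutive reflXZ := by
  intro w
  funext i
  fin_cases i <;> simp [reflXZ]

theorem measurePreserving_reflXZ : MeasurePreserving reflXZ := by
  have h : reflXZ = fun w i => (if i = 1 then Neg.neg else id : ℝ → ℝ) (w i) := by
    funext w i
    fin_cases i <;> simp [reflXZ]
  rw [h]
  refine volume_preserving_pi fun i => ?_
  split_ifs
  · exact Measure.measurePreserving_neg volume
  · exact MeasurePreserving.id volume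

theorem measurableEmbedding_reflXZ : MeasurableEmbedding reflXZ :=
  (MeasurableEquiv.ofInvolutive _ reflXZ_involutive
    measurePreserving_reflXZ.measurable).measurableEmbedding

/-- If `(w 0, w 1) = r (cos φ, sin φ)`, rotating by `-2φ` gives `r (cos φ, -sin φ)`. -/
theorem exists_rotZ_eq_reflXZ (w : V3) : ∃ θ, rotZ θ w = reflXZ w := by
  set z : ℂ := ⟨w 0, w 1⟩
  refine ⟨-2 * z.arg, ?_⟩
  have hc : ‖z‖ * Real.cos z.arg = w 0 := Complex.norm_mul_cos_arg z
  have hs : ‖z‖ * Real.sin z.arg = w 1 := Complex.norm_mul_sin_arg z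
  funext i
  fin_cases i
  all_goals simp only [rotZ, reflXZ, Fin.zero_eta, Fin.mk_one, Fin.reduceFinMk, Matrix.cons_val,
    neg_mul, cos_neg, sin_neg, cos_two_mul, sin_two_mul, ← hc, ← hs]
  · linear_combination (norm := ring_nf) (2 * ‖z‖ * Real.cos z.arg) * sin_sq_add_cos_sq z.arg
  · ring

theorem reflXZ_mem_of_rotZ_image_eq {Ω : Set V3} (hsym : ∀ θ : ℝ, rotZ θ '' Ω = Ω) {w : V3}
    (hw : w ∈ Ω) : reflXZ w ∈ Ω := by
  obtain ⟨θ, hθ⟩ := exists_rotZ_eq_reflXZ w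
  rw [← hθ, ← hsym θ]
  exact mem_image_of_mem _ hw

theorem reflXZ_preimage_of_rotZ_image_eq {Ω : Set V3} (hsym : ∀ θ : ℝ, rotZ θ '' Ω = Ω) :
    reflXZ ⁻¹' Ω = Ω := by
  ext w
  refine ⟨fun hw => ?_, reflXZ_mem_of_rotZ_image_eq hsym⟩
  simpa [reflXZ_involutive w] using reflXZ_mem_of_rotZ_image_eq hsym hw

theorem setIntegral_setIntegral_eq_zero_of_odd {α : Type*} [MeasurableSpace α] {μ : Measure α}
    {e : α → α} (he : MeasurePreserving e μ μ) (he' : MeasurableEmbedding e) {s : Set α}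
    (hs : e ⁻¹' s = s) {f : α → α → ℝ} (hf : ∀ x y, f (e x) (e y) = -f x y) :
    ∫ x in s, ∫ y in s, f x y ∂μ ∂μ = 0 := by
  have hinner (x : α) : ∫ y in s, f (e x) y ∂μ = -∫ y in s, f x y ∂μ := by
    rw [← he.setIntegral_preimage_emb he', hs]
    simp only [hf, integral_neg]
  have hodd := he.setIntegral_preimage_emb he' (fun x => ∫ y in s, f x y ∂μ) s
  rw [hs] at hodd
  simp only [hinner, integral_neg] at hodd
  linarith

def helicityDensity (B : V3 → V3) (x y : V3) : ℝ :=
  dot3 (B x) (cross3 (B y) (((norm3 (x - y)) ^ 3)⁻¹ • (x - y)))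

theorem norm3_reflXZ_sub_reflXZ (x y : V3) : norm3 (reflXZ x - reflXZ y) = norm3 (x - y) := by
  simp only [norm3, dot3, reflXZ, Pi.sub_apply, Matrix.cons_val]
  ring_nf

theorem helicityDensity_reflXZ {B : V3 → V3} (hB : ∀ w, B (reflXZ w) = -reflXZ (B w))
    (x y : V3) : helicityDensity B (reflXZ x) (reflXZ y) = -helicityDensity B x y := by
  simp only [helicityDensity, hB, norm3_reflXZ_sub_reflXZ]
  simp only [dot3, cross3, reflXZ, Pi.smul_apply, smul_eq_mul, Pi.sub_apply, Pi.neg_apply,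
    Matrix.cons_val]
  ring

theorem helicity_eq_zero_of_reflXZ {Ω : Set V3} (hΩ : reflXZ ⁻¹' Ω = Ω) {B : V3 → V3}
    (hB : ∀ w, B (reflXZ w) = -reflXZ (B w)) : helicity Ω B = 0 := by
  change (4 * π)⁻¹ * ∫ x in Ω, ∫ y in Ω, helicityDensity B x y = 0
  rw [setIntegral_setIntegral_eq_zero_of_odd measurePreserving_reflXZ measurableEmbedding_reflXZ
    hΩ (helicityDensity_reflXZ hB), mul_zero]

def azimuthalField (w : V3) : V3 := ((w 0) ^ 2 + (w 1) ^ 2)⁻¹ • ![-(w 1), w 0, 0]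

theorem azimuthalField_reflXZ (w : V3) :
    azimuthalField (reflXZ w) = -reflXZ (azimuthalField w) := by
  funext i
  fin_cases i <;> simp [azimuthalField, reflXZ]

theorem helicity_axisymmetric_neumann_field_eq_zero_general (Ω : Set V3)
    (hsym : ∀ θ : ℝ, rotZ θ '' Ω = Ω) :
    helicity Ω (fun w => ((w 0) ^ 2 + (w 1) ^ 2)⁻¹ • ![-(w 1), w 0, 0]) = 0 :=
  helicity_eq_zero_of_reflXZ (B := azimuthalField) (reflXZ_preimage_of_rotZ_image_eq hsym)
    azimuthalField_reflXZ

/-- The helicity of the harmonic Neumann field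
`Γ(x,y,z) = (−y,x,0)/(x²+y²)` of an axisymmetric bounded smooth domain whose closure
avoids the `z`-axis vanishes. -/
theorem helicity_axisymmetric_neumann_field_eq_zero (Ω : Set V3)
    (hΩ : IsBoundedSmoothDomain Ω)
    (hax : ∀ w ∈ closure Ω, (w 0) ^ 2 + (w 1) ^ 2 ≠ 0)
    (hsym : ∀ θ : ℝ, rotZ θ '' Ω = Ω) :
    helicity Ω (fun w => ((w 0) ^ 2 + (w 1) ^ 2)⁻¹ • ![-(w 1), w 0, 0]) = 0 :=
  helicity_axisymmetric_neumann_field_eq_zero_general Ω hsym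
end
end
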